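/- Let X ~ Bin(n, p) be a binomially distributed random variable and let k ∈ {0, 1, …, n} be such that Pr(X ≥ k) > 0. Then E(X | X ≥ k) ≤ E(X) + k = np + k. -/
import Mathlib


open scoped BigOperators

namespace BinomialEstimates

/-- `binP m p a = Pr(Bin(m,p) = a)`, the binomial probability mass function. -/
noncomputable def binP (m : ℕ) (p : ℝ) (a : ℕ) : ℝ :=
  (m.choose a : ℝ) * p ^ a * (1 - p) ^ (m - a)

lemma binP_nonneg (m : ℕ) (p : ℝ) (a : ℕ) (hp0 : 0 ≤ p) (hp1 : p ≤ 1) :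
    0 ≤ binP m p a := by
  unfold binP
  have : (0:ℝ) ≤ 1 - p := by linarith
  positivity

lemma succ_mul_binP (m : ℕ) (p : ℝ) (b : ℕ) :
    ((b : ℝ) + 1) * binP (m + 1) p (b + 1) = ((m : ℝ) + 1) * p * binP m p b := by
  unfold binP
  have h := Nat.add_one_mul_choose_eq m b
  have h' : ((m : ℝ) + 1) * (m.choose b : ℝ) = ((m+1).choose (b+1) : ℝ) * ((b:ℝ) + 1) := by
    exact_mod_cast congrArg (Nat.cast (R := ℝ)) h
  have he : m + 1 - (b + 1) = m - b := Nat.succ_sub_succ m b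
  rw [he]
  linear_combination (-(p ^ (b + 1) * (1 - p) ^ (m - b))) * h'

lemma binP_succ_succ (m : ℕ) (p : ℝ) (b : ℕ) :
    binP (m + 1) p (b + 1) = p * binP m p b + (1 - p) * binP m p (b + 1) := by
  unfold binP
  have hc : ((m+1).choose (b+1) : ℝ) = (m.choose b : ℝ) + (m.choose (b+1) : ℝ) := by
    exact_mod_cast congrArg (Nat.cast (R := ℝ)) (Nat.choose_succ_succ m b)
  have he : m + 1 - (b + 1) = m - b := Nat.succ_sub_succ m b
  rcases le_or_gt (b + 1) m with hb | hb
  · have he2 : m - b = (m - (b + 1)) + 1 := by omega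
    rw [he, hc, he2]
    ring
  · have h0 : m.choose (b + 1) = 0 := Nat.choose_eq_zero_of_lt hb
    have he3 : m - (b+1) = 0 := by omega
    have he4 : m - b = m - b := rfl
    rw [he, hc, h0, he3]
    push_cast
    ring

lemma binP_sum_one (m : ℕ) (p : ℝ) :
    ∑ a ∈ Finset.range (m + 1), binP m p a = 1 := by
  have h := add_pow p (1 - p) m
  have h1 : (p + (1 - p)) ^ m = 1 := by norm_num
  rw [h1] at h
  rw [h]
  apply Finset.sum_congr rfl
  intro a _
  unfold binP
  ring

lemma filter_range_eq_Icc (n k : ℕ) :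
    Finset.filter (fun a => k ≤ a) (Finset.range (n + 1)) = Finset.Icc k n := by
  ext a
  simp [Nat.lt_succ_iff]
  omega

lemma sum_ite_eq_Icc (n k : ℕ) (f : ℕ → ℝ) :
    (∑ a ∈ Finset.range (n + 1), if k ≤ a then f a else 0) = ∑ a ∈ Finset.Icc k n, f a := by
  rw [← Finset.sum_filter, filter_range_eq_Icc]

lemma sum_Icc_shift (j m : ℕ) (f : ℕ → ℝ) :
    ∑ a ∈ Finset.Icc (j + 1) (m + 1), f a = ∑ b ∈ Finset.Icc j m, f (b + 1) := by
  rw [← Finset.map_add_right_Icc j m 1, Finset.sum_map]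
  rfl

/-- Let `X ~ Bin(n, p)` and `k ∈ {0, …, n}` with `Pr(X ≥ k) > 0`.
Then `E(X | X ≥ k) ≤ E(X) + k = np + k`. -/
theorem conditional_binomial_expectation (n k : ℕ) (p : ℝ)
    (hp0 : 0 ≤ p) (hp1 : p ≤ 1) (hk : k ≤ n)
    (hpos : 0 < ∑ a ∈ Finset.range (n + 1), if k ≤ a then binP n p a else 0) :
    (∑ a ∈ Finset.range (n + 1), if k ≤ a then (a : ℝ) * binP n p a else 0) /
        (∑ a ∈ Finset.range (n + 1), if k ≤ a then binP n p a else 0) ≤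
      (n : ℝ) * p + k := by
  rw [div_le_iff₀ hpos]
  rw [sum_ite_eq_Icc n k (fun a => (a : ℝ) * binP n p a),
      sum_ite_eq_Icc n k (fun a => binP n p a)] at *
  rcases Nat.eq_zero_or_pos k with hk0 | hk1
  · subst hk0
    -- Icc 0 n = range (n+1)
    have hIcc : Finset.Icc 0 n = Finset.range (n + 1) := by
      ext a; simp [Nat.lt_succ_iff]
    rw [hIcc] at *
    have hS : ∑ a ∈ Finset.range (n + 1), binP n p a = 1 := binP_sum_one n p
    rw [hS]
    cases n with
    | zero => simp
    | succ m =>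
      have hS1 : ∑ a ∈ Finset.range (m + 2), (a : ℝ) * binP (m + 1) p a
          = ((m : ℝ) + 1) * p := by
        rw [Finset.sum_range_succ' (fun a => (a : ℝ) * binP (m+1) p a) (m+1)]
        simp only [Nat.cast_zero, zero_mul, add_zero]
        have : ∀ b ∈ Finset.range (m + 1),
            ((b + 1 : ℕ) : ℝ) * binP (m+1) p (b+1) = ((m:ℝ)+1) * p * binP m p b := by
          intro b _
          push_cast
          exact succ_mul_binP m p b
        rw [Finset.sum_congr rfl this, ← Finset.mul_sum, binP_sum_one m p, mul_one]
      rw [hS1]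
      push_cast
      norm_num
  · -- k = j+1, n = m+1
    obtain ⟨j, rfl⟩ : ∃ j, k = j + 1 := ⟨k - 1, by omega⟩
    obtain ⟨m, rfl⟩ : ∃ m, n = m + 1 := ⟨n - 1, by omega⟩
    have hjm : j ≤ m := by omega
    set S := ∑ a ∈ Finset.Icc (j+1) (m+1), binP (m+1) p a with hSdef
    set U := ∑ b ∈ Finset.Icc (j+1) m, binP m p b with hUdef
    have hT : Finset.Icc j m = insert j (Finset.Icc (j+1) m) := by
      ext a; simp; omega
    -- S1 = (m+1)p * T where T = binP m p j + U
    have hS1 : ∑ a ∈ Finset.Icc (j+1) (m+1), (a : ℝ) * binP (m+1) p a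
        = ((m:ℝ)+1) * p * (binP m p j + U) := by
      rw [sum_Icc_shift j m (fun a => (a : ℝ) * binP (m+1) p a)]
      have : ∀ b ∈ Finset.Icc j m,
          ((b + 1 : ℕ) : ℝ) * binP (m+1) p (b+1) = ((m:ℝ)+1) * p * binP m p b := by
        intro b _
        push_cast
        exact succ_mul_binP m p b
      rw [Finset.sum_congr rfl this, ← Finset.mul_sum, hT,
        Finset.sum_insert (by simp)]
    -- S = p * (binP m p j + U) + (1-p) * (U + binP m p (m+1)) and binP m p (m+1) = 0
    have hbm : binP m p (m + 1) = 0 := by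
      unfold binP
      rw [Nat.choose_eq_zero_of_lt (by omega)]
      simp
    have hSeq : S = p * binP m p j + U := by
      rw [hSdef, sum_Icc_shift j m (fun a => binP (m+1) p a)]
      have : ∀ b ∈ Finset.Icc j m,
          binP (m+1) p (b+1) = p * binP m p b + (1-p) * binP m p (b+1) := by
        intro b _; exact binP_succ_succ m p b
      rw [Finset.sum_congr rfl this, Finset.sum_add_distrib, ← Finset.mul_sum,
        ← Finset.mul_sum]
      have h2 : ∑ b ∈ Finset.Icc j m, binP m p (b+1)
          = ∑ a ∈ Finset.Icc (j+1) (m+1), binP m p a :=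
        (sum_Icc_shift j m (fun a => binP m p a)).symm
      have h3 : ∑ a ∈ Finset.Icc (j+1) (m+1), binP m p a = U + binP m p (m+1) := by
        rw [hUdef, ← Finset.sum_Icc_succ_top (by omega : j + 1 ≤ m + 1)]
      rw [h2, h3, hbm, add_zero, hT, Finset.sum_insert (by simp), ← hUdef]
      nlinarith [binP_nonneg m p j hp0 hp1]
    -- key pieces
    have hUnn : 0 ≤ U := Finset.sum_nonneg fun b _ => binP_nonneg m p b hp0 hp1
    have hbj : 0 ≤ binP m p j := binP_nonneg m p j hp0 hp1
    have hUS : U ≤ S := by nlinarith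
    have hterm : binP (m+1) p (j+1) ≤ S := by
      apply Finset.single_le_sum (f := fun a => binP (m+1) p a)
        (fun a _ => binP_nonneg (m+1) p a hp0 hp1)
      simp; omega
    have hkey : ((m:ℝ)+1) * p * binP m p j = ((j:ℝ)+1) * binP (m+1) p (j+1) :=
      (succ_mul_binP m p j).symm
    have hS1' : ∑ a ∈ Finset.Icc (j+1) (m+1), (a : ℝ) * binP (m+1) p a
        = ((m:ℝ)+1) * p * U + ((j:ℝ)+1) * binP (m+1) p (j+1) := by
      rw [hS1]; nlinarith [hkey]
    rw [hS1']
    have hmp : 0 ≤ ((m:ℝ)+1) * p := by positivity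
    have hjp : 0 ≤ ((j:ℝ)+1) := by positivity
    push_cast
    nlinarith [mul_le_mul_of_nonneg_left hUS hmp,
      mul_le_mul_of_nonneg_left hterm hjp]

end BinomialEstimates
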